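/- arXiv:1009.2164 — 2 statements merged into one kernel-verified Lean document; each statement's English description precedes it below -/
import Mathlib

section
/- Let A and B be k×k real positive semidefinite matrices with supp(A) ⊇ supp(B). Then the infimum of (a·Aa)/(a·Ba) over all vectors a not in the kernel of B equals 1/σ₁(√B A⁻¹ √B), where A⁻¹ is the Moore–Penrose pseudoinverse of A and σ₁ denotes the largest eigenvalue. -/
open Matrix

/-- The maximal eigenvalue of a square real matrix (supremum of its eigenvalues). -/
noncomputable def maxEig {k : ℕ} (M : Matrix (Fin k) (Fin k) ℝ) : ℝ :=
  sSup {t : ℝ | ∃ v : Fin k → ℝ, v ≠ 0 ∧ M *ᵥ v = t • v}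

/-- The four Penrose conditions characterizing the Moore–Penrose pseudoinverse. -/
def IsMoorePenroseInv {k : ℕ} (A Ainv : Matrix (Fin k) (Fin k) ℝ) : Prop :=
  A * Ainv * A = A ∧ Ainv * A * Ainv = Ainv ∧
    (A * Ainv)ᵀ = A * Ainv ∧ (Ainv * A)ᵀ = Ainv * A

/-- The square root of a positive semidefinite matrix, as defined in Mathlib (Dec 2024). -/
noncomputable def Matrix.PosSemidef.sqrt {n : Type*} [Fintype n] [DecidableEq n]
    {A : Matrix n n ℝ} (hA : A.PosSemidef) : Matrix n n ℝ :=
  hA.1.eigenvectorUnitary.1 * diagonal ((↑) ∘ (√·) ∘ hA.1.eigenvalues) *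
  (star hA.1.eigenvectorUnitary : Matrix n n ℝ)

lemma Matrix.PosSemidef.posSemidef_sqrt {n : Type*} [Fintype n] [DecidableEq n]
    {A : Matrix n n ℝ} (hA : A.PosSemidef) : hA.sqrt.PosSemidef := by
  unfold Matrix.PosSemidef.sqrt
  have h := (posSemidef_diagonal_iff.mpr fun i => Real.sqrt_nonneg (hA.1.eigenvalues i) :
    (diagonal ((↑) ∘ (√·) ∘ hA.1.eigenvalues) : Matrix n n ℝ).PosSemidef)
  have := h.mul_mul_conjTranspose_same (hA.1.eigenvectorUnitary : Matrix n n ℝ)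
  simpa [Unitary.coe_star, Matrix.star_eq_conjTranspose] using this

lemma Matrix.PosSemidef.sqrt_mul_self {n : Type*} [Fintype n] [DecidableEq n]
    {A : Matrix n n ℝ} (hA : A.PosSemidef) : hA.sqrt * hA.sqrt = A := by
  unfold Matrix.PosSemidef.sqrt
  conv_rhs => rw [hA.1.spectral_theorem, Unitary.conjStarAlgAut_apply]
  have hU : (star hA.1.eigenvectorUnitary : Matrix n n ℝ) * hA.1.eigenvectorUnitary.1 = 1 :=
    Unitary.coe_star_mul_self _
  have hd : diagonal ((↑) ∘ (√·) ∘ hA.1.eigenvalues) * diagonal ((↑) ∘ (√·) ∘ hA.1.eigenvalues)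
      = (diagonal (RCLike.ofReal ∘ hA.1.eigenvalues) : Matrix n n ℝ) := by
    rw [diagonal_mul_diagonal]; congr 1; ext i
    simp [Real.mul_self_sqrt (hA.eigenvalues_nonneg i)]
  calc _ = hA.1.eigenvectorUnitary.1 * diagonal ((↑) ∘ (√·) ∘ hA.1.eigenvalues) *
      ((star hA.1.eigenvectorUnitary : Matrix n n ℝ) * hA.1.eigenvectorUnitary.1) *
      diagonal ((↑) ∘ (√·) ∘ hA.1.eigenvalues) * (star hA.1.eigenvectorUnitary : Matrix n n ℝ) := by
        simp only [mul_assoc]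
    _ = _ := by rw [hU, Matrix.mul_one, mul_assoc _ (diagonal _) (diagonal _), hd]

lemma rayleigh_le {k : ℕ} (hk : 0 < k) (M : Matrix (Fin k) (Fin k) ℝ) (hM : M.IsHermitian)
    (x : Fin k → ℝ) :
    x ⬝ᵥ M *ᵥ x ≤ (Finset.univ.sup' (by simpa using Finset.univ_nonempty_iff.2 ⟨⟨0, hk⟩⟩) hM.eigenvalues) * (x ⬝ᵥ x) := by
  classical
  set lam := Finset.univ.sup' (by simpa using Finset.univ_nonempty_iff.2 ⟨⟨0, hk⟩⟩) hM.eigenvalues with hlam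
  set U : Matrix (Fin k) (Fin k) ℝ := (hM.eigenvectorUnitary : Matrix (Fin k) (Fin k) ℝ) with hU
  have hUU : U * star U = 1 := (Matrix.mem_unitaryGroup_iff).mp hM.eigenvectorUnitary.2
  have hstar : star U = Uᵀ := by simp [Matrix.star_eq_conjTranspose]
  set y : Fin k → ℝ := Uᵀ *ᵥ x with hy
  have hyy : y ⬝ᵥ y = x ⬝ᵥ x := by
    rw [hy, dotProduct_mulVec, ← mulVec_transpose, mulVec_mulVec]
    rw [show Uᵀᵀ * Uᵀ = 1 by rw [transpose_transpose, ← hstar]; exact hUU]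
    simp
  have hx : x ⬝ᵥ M *ᵥ x = ∑ i, hM.eigenvalues i * (y i)^2 := by
    conv_lhs => rw [hM.spectral_theorem]
    rw [Unitary.conjStarAlgAut_apply, ← hU, hstar]
    rw [← mulVec_mulVec, ← mulVec_mulVec, dotProduct_mulVec, ← mulVec_transpose, ← hy]
    have : diagonal (RCLike.ofReal ∘ hM.eigenvalues) = diagonal hM.eigenvalues := by
      congr 1
    rw [this]
    simp [dotProduct, mulVec_diagonal]
    exact Finset.sum_congr rfl fun i _ => by ring
  rw [hx, ← hyy]
  have hb : ∀ i ∈ Finset.univ, hM.eigenvalues i * (y i)^2 ≤ lam * (y i)^2 := fun i _ =>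
    mul_le_mul_of_nonneg_right (Finset.le_sup' _ (Finset.mem_univ i)) (sq_nonneg _)
  calc ∑ i, hM.eigenvalues i * (y i)^2 ≤ ∑ i, lam * (y i)^2 := Finset.sum_le_sum hb
    _ = lam * (y ⬝ᵥ y) := by
        rw [dotProduct, Finset.mul_sum]
        exact Finset.sum_congr rfl fun i _ => by ring

lemma dot_self_pos {k : ℕ} {v : Fin k → ℝ} (hv : v ≠ 0) : 0 < v ⬝ᵥ v := by
  rcases lt_or_eq_of_le (Finset.sum_nonneg fun i _ => mul_self_nonneg (v i)) with h | h
  · exact h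
  · exact absurd (dotProduct_self_eq_zero.mp h.symm) hv

lemma maxEig_spec {k : ℕ} (M : Matrix (Fin k) (Fin k) ℝ) (hM : M.IsHermitian) (hk : 0 < k) :
    (∃ v : Fin k → ℝ, v ≠ 0 ∧ M *ᵥ v = maxEig M • v) ∧
      ∀ x : Fin k → ℝ, x ⬝ᵥ M *ᵥ x ≤ maxEig M * (x ⬝ᵥ x) := by
  classical
  have hne : (Finset.univ : Finset (Fin k)).Nonempty := by
    simpa using Finset.univ_nonempty_iff.2 ⟨⟨0, hk⟩⟩
  set lam := Finset.univ.sup' hne hM.eigenvalues with hlam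
  obtain ⟨i, _, hi⟩ := Finset.exists_mem_eq_sup' hne hM.eigenvalues
  have hvec : M *ᵥ ⇑(hM.eigenvectorBasis i) = lam • ⇑(hM.eigenvectorBasis i) := by
    rw [hlam, hi]; exact hM.mulVec_eigenvectorBasis i
  have hmem : lam ∈ {t : ℝ | ∃ v : Fin k → ℝ, v ≠ 0 ∧ M *ᵥ v = t • v} :=
    ⟨_, by simpa using hM.eigenvectorBasis.orthonormal.ne_zero i, hvec⟩
  have hub : ∀ t ∈ {t : ℝ | ∃ v : Fin k → ℝ, v ≠ 0 ∧ M *ᵥ v = t • v}, t ≤ lam := by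
    rintro t ⟨v, hv, hMv⟩
    have h1 : t * (v ⬝ᵥ v) ≤ lam * (v ⬝ᵥ v) := by
      have := rayleigh_le hk M hM v
      rwa [hMv, dotProduct_smul, smul_eq_mul] at this
    exact le_of_mul_le_mul_right h1 (dot_self_pos hv)
  have heq : maxEig M = lam := IsGreatest.csSup_eq ⟨hmem, hub⟩
  refine ⟨⟨_, (by simpa using hM.eigenvectorBasis.orthonormal.ne_zero i : (⇑(hM.eigenvectorBasis i) : Fin k → ℝ) ≠ 0), by rw [heq]; exact hvec⟩, ?_⟩
  intro x
  rw [heq]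
  exact rayleigh_le hk M hM x

lemma dot_sqrt {k : ℕ} {A : Matrix (Fin k) (Fin k) ℝ} (hA : A.PosSemidef)
    (x y : Fin k → ℝ) : x ⬝ᵥ A *ᵥ y = (hA.sqrt *ᵥ x) ⬝ᵥ (hA.sqrt *ᵥ y) := by
  conv_lhs => rw [← hA.sqrt_mul_self]
  rw [← mulVec_mulVec, dotProduct_mulVec, ← mulVec_transpose]
  congr 1
  rw [show hA.sqrtᵀ = hA.sqrt from hA.posSemidef_sqrt.isHermitian]

lemma psd_cauchy {k : ℕ} {A : Matrix (Fin k) (Fin k) ℝ} (hA : A.PosSemidef)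
    (x y : Fin k → ℝ) :
    (x ⬝ᵥ A *ᵥ y)^2 ≤ (x ⬝ᵥ A *ᵥ x) * (y ⬝ᵥ A *ᵥ y) := by
  rw [dot_sqrt hA x y, dot_sqrt hA x x, dot_sqrt hA y y]
  simpa [dotProduct, pow_two] using
    Finset.sum_mul_sq_le_sq_mul_sq Finset.univ (hA.sqrt *ᵥ x) (hA.sqrt *ᵥ y)

lemma matrix_eq_zero_of_mulVec {k : ℕ} {M : Matrix (Fin k) (Fin k) ℝ}
    (h : ∀ x : Fin k → ℝ, M *ᵥ x = 0) : M = 0 := by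
  ext i j
  simpa [mulVec_single] using congrFun (h (Pi.single j 1)) i

lemma psd_dot_nonneg {k : ℕ} {A : Matrix (Fin k) (Fin k) ℝ} (hA : A.PosSemidef)
    (x : Fin k → ℝ) : 0 ≤ x ⬝ᵥ A *ᵥ x := by
  rw [dot_sqrt hA x x]
  exact Finset.sum_nonneg fun i _ => mul_self_nonneg _

lemma psd_dot_zero {k : ℕ} {A : Matrix (Fin k) (Fin k) ℝ} (hA : A.PosSemidef)
    {x : Fin k → ℝ} (h : x ⬝ᵥ A *ᵥ x = 0) : A *ᵥ x = 0 := by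
  have hs : hA.sqrt *ᵥ x = 0 := by
    rw [dot_sqrt hA x x] at h
    exact dotProduct_self_eq_zero.mp h
  have : A *ᵥ x = hA.sqrt *ᵥ (hA.sqrt *ᵥ x) := by
    rw [mulVec_mulVec, hA.sqrt_mul_self]
  rw [this, hs, mulVec_zero]

lemma mp_unique {k : ℕ} {A X Y : Matrix (Fin k) (Fin k) ℝ}
    (hX : IsMoorePenroseInv A X) (hY : IsMoorePenroseInv A Y) : X = Y := by
  obtain ⟨hX1, hX2, hX3, hX4⟩ := hX
  obtain ⟨hY1, hY2, hY3, hY4⟩ := hY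
  have hAX : A * X = A * Y := by
    calc A * X = (A * X)ᵀ := hX3.symm
    _ = ((A * Y * A) * X)ᵀ := by rw [hY1]
    _ = ((A * Y) * (A * X))ᵀ := by rw [mul_assoc (A * Y)]
    _ = (A * X)ᵀ * (A * Y)ᵀ := transpose_mul _ _
    _ = (A * X) * (A * Y) := by rw [hX3, hY3]
    _ = (A * X * A) * Y := (mul_assoc _ _ _).symm
    _ = A * Y := by rw [hX1]
  have hXA : X * A = Y * A := by
    calc X * A = (X * A)ᵀ := hX4.symm
    _ = (X * (A * Y * A))ᵀ := by rw [hY1]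
    _ = ((X * A) * (Y * A))ᵀ := by simp only [mul_assoc]
    _ = (Y * A)ᵀ * (X * A)ᵀ := transpose_mul _ _
    _ = (Y * A) * (X * A) := by rw [hX4, hY4]
    _ = Y * (A * X * A) := by simp only [mul_assoc]
    _ = Y * A := by rw [hX1]
  calc X = X * A * X := hX2.symm
  _ = X * (A * Y) := by rw [mul_assoc, hAX]
  _ = (Y * A) * Y := by rw [← mul_assoc, hXA]
  _ = Y := hY2

lemma mp_symm {k : ℕ} {A Ainv : Matrix (Fin k) (Fin k) ℝ} (hA : Aᵀ = A)
    (h : IsMoorePenroseInv A Ainv) : Ainvᵀ = Ainv := by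
  refine mp_unique ?_ h
  have e3 : A * Ainvᵀ = Ainv * A := by
    calc A * Ainvᵀ = Aᵀ * Ainvᵀ := by rw [hA]
    _ = (Ainv * A)ᵀ := (transpose_mul _ _).symm
    _ = Ainv * A := h.2.2.2
  have e4 : Ainvᵀ * A = A * Ainv := by
    calc Ainvᵀ * A = Ainvᵀ * Aᵀ := by rw [hA]
    _ = (A * Ainv)ᵀ := (transpose_mul _ _).symm
    _ = A * Ainv := h.2.2.1
  refine ⟨?_, ?_, ?_, ?_⟩
  · calc A * Ainvᵀ * A = Aᵀ * Ainvᵀ * Aᵀ := by rw [hA]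
    _ = (A * Ainv * A)ᵀ := by simp only [transpose_mul, mul_assoc]
    _ = Aᵀ := by rw [h.1]
    _ = A := hA
  · calc Ainvᵀ * A * Ainvᵀ = Ainvᵀ * Aᵀ * Ainvᵀ := by rw [hA]
    _ = (Ainv * A * Ainv)ᵀ := by simp only [transpose_mul, mul_assoc]
    _ = Ainvᵀ := by rw [h.2.1]
  · rw [e3, h.2.2.2]
  · rw [e4, h.2.2.1]

lemma dot_mulVec_mulVec {k : ℕ} (C D : Matrix (Fin k) (Fin k) ℝ) (x y : Fin k → ℝ) :
    (C *ᵥ x) ⬝ᵥ (D *ᵥ y) = x ⬝ᵥ ((Cᵀ * D) *ᵥ y) := by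
  calc (C *ᵥ x) ⬝ᵥ (D *ᵥ y) = x ⬝ᵥ (Cᵀ *ᵥ (D *ᵥ y)) := by
        rw [dotProduct_comm, dotProduct_mulVec, ← mulVec_transpose, dotProduct_comm]
  _ = x ⬝ᵥ ((Cᵀ * D) *ᵥ y) := by rw [mulVec_mulVec]

/-- for real PSD matrices `A`, `B` with `supp A ⊇ supp B`
(equivalently `ker A ⊆ ker B`), the infimum of the Rayleigh ratio
`(a·Aa)/(a·Ba)` over `a ∉ ker B` equals `1/σ₁(√B A⁻¹ √B)` with `A⁻¹` the
Moore–Penrose pseudoinverse. -/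
theorem stmt0 {k : ℕ} (A B Ainv : Matrix (Fin k) (Fin k) ℝ)
    (hA : A.PosSemidef) (hB : B.PosSemidef)
    (hsupp : ∀ v : Fin k → ℝ, A *ᵥ v = 0 → B *ᵥ v = 0)
    (hMP : IsMoorePenroseInv A Ainv) :
    sInf {r : ℝ | ∃ a : Fin k → ℝ, B *ᵥ a ≠ 0 ∧ r = (a ⬝ᵥ A *ᵥ a) / (a ⬝ᵥ B *ᵥ a)}
      = 1 / maxEig (hB.sqrt * Ainv * hB.sqrt) := by
  classical
  have hAt : Aᵀ = A := by simpa [Matrix.IsSymm] using hA.isHermitian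
  have hBt : Bᵀ = B := by simpa [Matrix.IsSymm] using hB.isHermitian
  have hs : Ainvᵀ = Ainv := mp_symm hAt hMP
  obtain ⟨h1, h2, h3, h4⟩ := hMP
  set S := hB.sqrt with hSdef
  have hSt : Sᵀ = S := by simpa [Matrix.IsSymm] using hB.posSemidef_sqrt.isHermitian
  have hSS : S * S = B := hB.sqrt_mul_self
  by_cases hB0 : B = 0
  · -- degenerate case
    have hset : {r : ℝ | ∃ a : Fin k → ℝ, B *ᵥ a ≠ 0 ∧ r = (a ⬝ᵥ A *ᵥ a) / (a ⬝ᵥ B *ᵥ a)} = ∅ := by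
      ext r; simp [hB0]
    have hS0 : S = 0 := by
      have h0 : Sᴴ * S = 0 := by
        rw [show Sᴴ = S by exact hB.posSemidef_sqrt.isHermitian, hSS, hB0]
      exact Matrix.conjTranspose_mul_self_eq_zero.mp h0
    have hM0 : S * Ainv * S = 0 := by rw [hS0, Matrix.zero_mul, Matrix.mul_zero]
    have hmax : maxEig (S * Ainv * S) = 0 := by
      rw [hM0]
      rcases Nat.eq_zero_or_pos k with hk | hk
      · unfold maxEig
        have : {t : ℝ | ∃ v : Fin k → ℝ, v ≠ 0 ∧ (0 : Matrix (Fin k) (Fin k) ℝ) *ᵥ v = t • v} = ∅ := by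
          ext t
          simp only [Set.mem_setOf_eq, Set.mem_empty_iff_false, iff_false, not_exists]
          rintro v ⟨hv, -⟩
          exact hv (funext fun i => absurd i.2 (by omega))
        rw [this, Real.sSup_empty]
      · unfold maxEig
        have : {t : ℝ | ∃ v : Fin k → ℝ, v ≠ 0 ∧ (0 : Matrix (Fin k) (Fin k) ℝ) *ᵥ v = t • v} = {0} := by
          ext t
          simp only [Set.mem_setOf_eq, Set.mem_singleton_iff]
          constructor
          · rintro ⟨v, hv, he⟩
            rw [zero_mulVec] at he
            rcases smul_eq_zero.mp he.symm with h | h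
            · exact h
            · exact absurd h hv
          · rintro rfl
            refine ⟨Pi.single ⟨0, hk⟩ 1, fun h => (one_ne_zero : (1:ℝ) ≠ 0) (by simpa using congrFun h ⟨0, hk⟩), ?_⟩
            rw [zero_mulVec, zero_smul]
        rw [this, csSup_singleton]
    rw [hset, Real.sInf_empty, hmax]
    simp
  · -- main case
    have hk : 0 < k := by
      rcases Nat.eq_zero_or_pos k with h0 | h; swap; · exact h
      exact absurd (by ext i j; exact absurd i.2 (by omega) : B = 0) hB0
    have hcomm : A * Ainv = Ainv * A := by
      calc A * Ainv = (A * Ainv)ᵀ := h3.symm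
      _ = Ainvᵀ * Aᵀ := transpose_mul _ _
      _ = Ainv * A := by rw [hs, hAt]
    -- projection fact
    have hBQ : B * (Ainv * A) = B := by
      have hz : B * (1 - Ainv * A) = 0 := by
        apply matrix_eq_zero_of_mulVec
        intro x
        rw [← mulVec_mulVec]
        apply hsupp
        rw [mulVec_mulVec, show A * (1 - Ainv * A) = 0 by
          rw [mul_sub, mul_one, ← mul_assoc, h1, sub_self], zero_mulVec]
      have := sub_eq_zero.mp (by rwa [mul_sub, mul_one] at hz)
      exact this.symm
    have hPB : A * Ainv * B = B := by
      rw [hcomm]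
      have := congrArg transpose hBQ
      rwa [transpose_mul, h4, hBt] at this
    have hAinvPSD : Ainv.PosSemidef := by
      have h := hA.conjTranspose_mul_mul_same Ainv
      rwa [show Ainvᴴ = Ainv by rw [show Ainvᴴ = Ainvᵀ by simp, hs], h2] at h
    have hMPSD : (S * Ainv * S).PosSemidef := by
      have h := hAinvPSD.conjTranspose_mul_mul_same S
      rwa [show Sᴴ = S by exact hB.posSemidef_sqrt.isHermitian] at h
    obtain ⟨⟨v, hv, hvec⟩, hray⟩ := maxEig_spec (S * Ainv * S) hMPSD.isHermitian hk
    set lam := maxEig (S * Ainv * S) with hlamdef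
    -- key inequality
    have key : ∀ a : Fin k → ℝ,
        (a ⬝ᵥ B *ᵥ a)^2 ≤ (a ⬝ᵥ A *ᵥ a) * (lam * (a ⬝ᵥ B *ᵥ a)) := by
      intro a
      have hcs := psd_cauchy hA a ((Ainv * B) *ᵥ a)
      have t1 : a ⬝ᵥ A *ᵥ ((Ainv * B) *ᵥ a) = a ⬝ᵥ B *ᵥ a := by
        rw [mulVec_mulVec, ← mul_assoc, mul_assoc A Ainv B, ← mul_assoc, hPB]
      have t2 : ((Ainv * B) *ᵥ a) ⬝ᵥ A *ᵥ ((Ainv * B) *ᵥ a)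
          = (S *ᵥ a) ⬝ᵥ (S * Ainv * S) *ᵥ (S *ᵥ a) := by
        have e : A * (Ainv * (S * S)) = S * S := by rw [← mul_assoc, hSS, hPB]
        have hm : ((Ainv * B)ᵀ * A) * (Ainv * B) = (Sᵀ * (S * Ainv * S)) * S := by
          rw [transpose_mul, hs, hBt, hSt, ← hSS]
          simp only [mul_assoc]
          rw [e]
        rw [dot_mulVec_mulVec, dot_mulVec_mulVec, mulVec_mulVec, mulVec_mulVec, hm]
      have t3 : (S *ᵥ a) ⬝ᵥ (S * Ainv * S) *ᵥ (S *ᵥ a) ≤ lam * (a ⬝ᵥ B *ᵥ a) := by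
        have := hray (S *ᵥ a)
        rwa [show (S *ᵥ a) ⬝ᵥ (S *ᵥ a) = a ⬝ᵥ B *ᵥ a from (dot_sqrt hB a a).symm] at this
      calc (a ⬝ᵥ B *ᵥ a)^2 = (a ⬝ᵥ A *ᵥ ((Ainv * B) *ᵥ a))^2 := by rw [t1]
      _ ≤ (a ⬝ᵥ A *ᵥ a) * (((Ainv * B) *ᵥ a) ⬝ᵥ A *ᵥ ((Ainv * B) *ᵥ a)) := hcs
      _ = (a ⬝ᵥ A *ᵥ a) * ((S *ᵥ a) ⬝ᵥ (S * Ainv * S) *ᵥ (S *ᵥ a)) := by rw [t2]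
      _ ≤ (a ⬝ᵥ A *ᵥ a) * (lam * (a ⬝ᵥ B *ᵥ a)) :=
        mul_le_mul_of_nonneg_left t3 (psd_dot_nonneg hA a)
    -- positivity of lam
    obtain ⟨a₀, ha₀⟩ : ∃ a : Fin k → ℝ, B *ᵥ a ≠ 0 := by
      by_contra h
      push_neg at h
      exact hB0 (matrix_eq_zero_of_mulVec h)
    have hqB₀ : 0 < a₀ ⬝ᵥ B *ᵥ a₀ :=
      lt_of_le_of_ne (psd_dot_nonneg hB a₀) fun h => ha₀ (psd_dot_zero hB h.symm)
    have hlam : 0 < lam := by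
      by_contra hcon
      push_neg at hcon
      have h5 : lam * (a₀ ⬝ᵥ B *ᵥ a₀) ≤ 0 :=
        mul_nonpos_iff.mpr (Or.inr ⟨hcon, hqB₀.le⟩)
      have h6 : (a₀ ⬝ᵥ A *ᵥ a₀) * (lam * (a₀ ⬝ᵥ B *ᵥ a₀)) ≤ 0 :=
        mul_nonpos_iff.mpr (Or.inl ⟨psd_dot_nonneg hA a₀, h5⟩)
      nlinarith [key a₀]
    -- lower bound
    have hlb : ∀ r ∈ {r : ℝ | ∃ a : Fin k → ℝ, B *ᵥ a ≠ 0 ∧ r = (a ⬝ᵥ A *ᵥ a) / (a ⬝ᵥ B *ᵥ a)},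
        1 / lam ≤ r := by
      rintro r ⟨a, hBa, rfl⟩
      have hqB : 0 < a ⬝ᵥ B *ᵥ a :=
        lt_of_le_of_ne (psd_dot_nonneg hB a) fun h => hBa (psd_dot_zero hB h.symm)
      rw [div_le_div_iff₀ hlam hqB, one_mul]
      have hk2 := key a
      rw [pow_two, ← mul_assoc] at hk2
      exact le_of_mul_le_mul_right hk2 hqB
    -- membership
    have hSv : S *ᵥ v ≠ 0 := by
      intro h
      have : (S * Ainv * S) *ᵥ v = 0 := by
        rw [← mulVec_mulVec, ← mulVec_mulVec, h, mulVec_zero, mulVec_zero]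
      rw [hvec] at this
      rcases smul_eq_zero.mp this with h' | h'
      · exact absurd h' (ne_of_gt hlam)
      · exact hv h'
    set w := Ainv *ᵥ (S *ᵥ v) with hwdef
    have hSw : S *ᵥ w = lam • v := by
      rw [hwdef, mulVec_mulVec, mulVec_mulVec, hvec]
    have hBw : B *ᵥ w = lam • (S *ᵥ v) := by
      rw [← hSS, ← mulVec_mulVec, hSw, mulVec_smul]
    have hBwne : B *ᵥ w ≠ 0 := by
      rw [hBw]
      exact smul_ne_zero (ne_of_gt hlam) hSv
    have hvv : 0 < v ⬝ᵥ v := dot_self_pos hv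
    have hqBw : w ⬝ᵥ B *ᵥ w = lam^2 * (v ⬝ᵥ v) := by
      rw [dot_sqrt hB w w, ← hSdef, hSw]
      rw [smul_dotProduct, dotProduct_smul, smul_eq_mul, smul_eq_mul]
      ring
    have hqAw : w ⬝ᵥ A *ᵥ w = lam * (v ⬝ᵥ v) := by
      have e1 : A *ᵥ w = (A * Ainv) *ᵥ (S *ᵥ v) := by rw [hwdef, mulVec_mulVec]
      rw [e1, hwdef, dot_mulVec_mulVec, hs, ← mul_assoc, h2]
      have : (S *ᵥ v) ⬝ᵥ Ainv *ᵥ (S *ᵥ v) = v ⬝ᵥ ((S * Ainv * S) *ᵥ v) := by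
        rw [dot_mulVec_mulVec, hSt, mul_assoc, mulVec_mulVec, ← mul_assoc]
      rw [this, hvec, dotProduct_smul, smul_eq_mul]
    have hmem : 1 / lam ∈ {r : ℝ | ∃ a : Fin k → ℝ, B *ᵥ a ≠ 0 ∧ r = (a ⬝ᵥ A *ᵥ a) / (a ⬝ᵥ B *ᵥ a)} := by
      refine ⟨w, hBwne, ?_⟩
      rw [hqAw, hqBw]
      field_simp
    exact le_antisymm (csInf_le ⟨1 / lam, hlb⟩ hmem) (le_csInf ⟨1 / lam, hmem⟩ hlb)
end

section
/- Let Ω be a finite set, p a strictly positive probability distribution on Ω, and A a closed set of probability distributions on Ω with p ∉ A. Then inf_{q∈A} K(q‖p) > 0, and for i.i.d. sampling from p, the probability that the empirical distribution of N samples lies in A is at most (|Ω|+N choose |Ω|)·exp(−N·inf_{q∈A} K(q‖p)); in particular it decays to 0 exponentially in N. -/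
open Matrix

-- pointwise Gibbs inequality
lemma stmt19_pt_gibbs {px qx : ℝ} (hpx : 0 < px) (hqx : 0 ≤ qx) :
    qx - px ≤ qx * Real.log (qx / px) ∧ (qx ≠ px → qx - px < qx * Real.log (qx / px)) := by
  rcases eq_or_lt_of_le hqx with h | h
  · simp only [← h]
    constructor
    · simp; linarith
    · intro _; simp; linarith
  · have hr : 0 < px / qx := div_pos hpx h
    have hle : Real.log (px / qx) ≤ px / qx - 1 := Real.log_le_sub_one_of_pos hr
    have hkey : Real.log (qx / px) = - Real.log (px / qx) := by
      rw [← Real.log_inv]; congr 1; field_simp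
    constructor
    · rw [hkey]
      have := mul_le_mul_of_nonneg_left hle hqx
      have h2 : qx * (px / qx - 1) = px - qx := by field_simp
      nlinarith
    · intro hne
      have hne' : px / qx ≠ 1 := by
        intro hc
        apply hne
        field_simp at hc
        linarith
      have hlt : Real.log (px / qx) < px / qx - 1 := Real.log_lt_sub_one_of_pos hr hne'
      rw [hkey]
      have := mul_lt_mul_of_pos_left hlt h
      have h2 : qx * (px / qx - 1) = px - qx := by field_simp
      nlinarith

lemma stmt19_gibbs_pos {Ω : Type*} [Fintype Ω] {p q : Ω → ℝ} (hp : ∀ x, 0 < p x)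
    (hpsum : ∑ x, p x = 1) (hq : ∀ x, 0 ≤ q x) (hqsum : ∑ x, q x = 1) (hne : q ≠ p) :
    0 < ∑ x, q x * Real.log (q x / p x) := by
  obtain ⟨x0, hx0⟩ : ∃ x, q x ≠ p x := by
    by_contra hc; push_neg at hc; exact hne (funext hc)
  have hsum : ∑ x, (q x - p x) < ∑ x, q x * Real.log (q x / p x) :=
    Finset.sum_lt_sum (fun x _ => (stmt19_pt_gibbs (hp x) (hq x)).1)
      ⟨x0, Finset.mem_univ _, (stmt19_pt_gibbs (hp x0) (hq x0)).2 hx0⟩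
  rw [Finset.sum_sub_distrib, hpsum, hqsum] at hsum
  linarith

lemma stmt19_gibbs_nonneg {Ω : Type*} [Fintype Ω] {p q : Ω → ℝ} (hp : ∀ x, 0 < p x)
    (hpsum : ∑ x, p x = 1) (hq : ∀ x, 0 ≤ q x) (hqsum : ∑ x, q x = 1) :
    0 ≤ ∑ x, q x * Real.log (q x / p x) := by
  have hsum : ∑ x, (q x - p x) ≤ ∑ x, q x * Real.log (q x / p x) :=
    Finset.sum_le_sum (fun x _ => (stmt19_pt_gibbs (hp x) (hq x)).1)
  rw [Finset.sum_sub_distrib, hpsum, hqsum] at hsum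
  linarith

lemma stmt19_term_rw (c t : ℝ) (hc : c ≠ 0) :
    t * Real.log (t / c) = t * Real.log t - t * Real.log c := by
  rcases eq_or_ne t 0 with h | h
  · simp [h]
  · rw [Real.log_div h hc]; ring

lemma stmt19_K_cont {Ω : Type*} [Fintype Ω] (p : Ω → ℝ) (hp : ∀ x, p x ≠ 0) :
    Continuous (fun q : Ω → ℝ => ∑ x, q x * Real.log (q x / p x)) := by
  have heq : (fun q : Ω → ℝ => ∑ x, q x * Real.log (q x / p x)) =
      fun q => ∑ x, (q x * Real.log (q x) - q x * Real.log (p x)) :=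
    funext fun q => Finset.sum_congr rfl fun x _ => stmt19_term_rw (p x) (q x) (hp x)
  rw [heq]
  exact continuous_finset_sum _ fun x _ =>
    ((Real.continuous_mul_log.comp (continuous_apply x)).sub
      ((continuous_apply x).mul continuous_const))

lemma stmt19_part1 {Ω : Type*} [Fintype Ω] (p : Ω → ℝ)
    (hp : ∀ x, 0 < p x) (hpsum : ∑ x, p x = 1)
    (A : Set (Ω → ℝ))
    (hAsub : A ⊆ {q : Ω → ℝ | (∀ x, 0 ≤ q x) ∧ ∑ x, q x = 1})
    (hclosed : IsClosed A) (hpA : p ∉ A) (hAne : A.Nonempty) :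
    ∃ q0 ∈ A, (0 < ∑ x, q0 x * Real.log (q0 x / p x)) ∧
      ∀ q ∈ A, (∑ x, q0 x * Real.log (q0 x / p x)) ≤ ∑ x, q x * Real.log (q x / p x) := by
  have hbdd : Bornology.IsBounded A := by
    rw [isBounded_iff_forall_norm_le]
    refine ⟨1, fun q hq => ?_⟩
    obtain ⟨hq0, hq1⟩ := hAsub hq
    rw [pi_norm_le_iff_of_nonneg zero_le_one]
    intro x
    rw [Real.norm_eq_abs, abs_le]
    constructor
    · linarith [hq0 x]
    · calc q x ≤ ∑ y, q y := Finset.single_le_sum (fun y _ => hq0 y) (Finset.mem_univ x)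
        _ = 1 := hq1
  have hcomp : IsCompact A := Metric.isCompact_of_isClosed_isBounded hclosed hbdd
  obtain ⟨q0, hq0A, hmin⟩ := hcomp.exists_isMinOn hAne
    (stmt19_K_cont p (fun x => (hp x).ne')).continuousOn
  refine ⟨q0, hq0A, ?_, fun q hq => hmin hq⟩
  obtain ⟨h0, h1⟩ := hAsub hq0A
  exact stmt19_gibbs_pos hp hpsum h0 h1 (fun hc => hpA (hc ▸ hq0A))

lemma stmt19_prod_fiber {Ω : Type*} [Fintype Ω] [DecidableEq Ω] {N : ℕ}
    (xs : Fin N → Ω) (f : Ω → ℝ) :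
    ∏ i, f (xs i) = ∏ y, f y ^ (Finset.univ.filter (fun i => xs i = y)).card := by
  rw [← Finset.prod_fiberwise_of_maps_to (t := Finset.univ)
    (fun i _ => Finset.mem_univ (xs i)) (fun i => f (xs i))]
  refine Finset.prod_congr rfl fun y _ => ?_
  rw [Finset.prod_congr rfl
      (fun i hi => by rw [(Finset.mem_filter.mp hi).2] : ∀ i ∈ _, f (xs i) = f y),
    Finset.prod_const]

lemma stmt19_key_identity {Ω : Type*} [Fintype Ω] [DecidableEq Ω] (p : Ω → ℝ)
    (hp : ∀ x, 0 < p x) {N : ℕ} (hN : 0 < N) (xs : Fin N → Ω) :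
    ∏ i, p (xs i) =
      Real.exp (-(N : ℝ) * ∑ y, (((Finset.univ.filter (fun i => xs i = y)).card : ℝ) / N) *
          Real.log ((((Finset.univ.filter (fun i => xs i = y)).card : ℝ) / N) / p y)) *
        ∏ i, (fun y => ((Finset.univ.filter (fun i => xs i = y)).card : ℝ) / N) (xs i) := by
  have hNpos : (0:ℝ) < N := Nat.cast_pos.mpr hN
  set c : Ω → ℕ := fun y => (Finset.univ.filter (fun i => xs i = y)).card with hc
  set t : Ω → ℝ := fun y => (c y : ℝ) / N with ht
  have h1 : ∏ i, p (xs i) = ∏ y, p y ^ c y := stmt19_prod_fiber xs p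
  have h2 : ∏ i, t (xs i) = ∏ y, t y ^ c y := stmt19_prod_fiber xs t
  show ∏ i, p (xs i) = Real.exp (-(N:ℝ) * ∑ y, t y * Real.log (t y / p y)) * ∏ i, t (xs i)
  rw [h1, h2]
  have h3 : -(N:ℝ) * ∑ y, t y * Real.log (t y / p y)
      = ∑ y, -((c y : ℝ) * Real.log (t y / p y)) := by
    rw [Finset.mul_sum]
    refine Finset.sum_congr rfl fun y _ => ?_
    have hy : t y = (c y : ℝ) / N := rfl
    rw [hy]
    field_simp
  rw [h3, Real.exp_sum, ← Finset.prod_mul_distrib]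
  refine Finset.prod_congr rfl fun y _ => ?_
  rcases Nat.eq_zero_or_pos (c y) with h0 | hcy
  · simp [h0]
  · have hty : 0 < t y := div_pos (Nat.cast_pos.mpr hcy) hNpos
    have hr : 0 < t y / p y := div_pos hty (hp y)
    rw [Real.exp_neg, Real.exp_nat_mul, Real.exp_log hr, div_pow]
    field_simp

lemma stmt19_card_bound {Ω : Type*} [Fintype Ω] [DecidableEq Ω] {N : ℕ}
    (T : Finset (Fin N → Ω)) :
    (T.image (fun xs => fun y => ((Finset.univ.filter (fun i => xs i = y)).card : ℝ) / N)).card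
      ≤ (Fintype.card Ω + N).choose (Fintype.card Ω) := by
  set m : (Fin N → Ω) → Multiset Ω := fun xs => Multiset.map xs Finset.univ.val with hm
  have hcnt : ∀ (xs : Fin N → Ω) (y : Ω),
      (Finset.univ.filter (fun i => xs i = y)).card = Multiset.count y (m xs) := by
    intro xs y
    rw [hm, Multiset.count_map]
    simp only [eq_comm]
    rfl
  have hEm : (fun xs => fun y => ((Finset.univ.filter (fun i => xs i = y)).card : ℝ) / N) =
      (fun s : Multiset Ω => fun y => ((Multiset.count y s : ℝ) / N)) ∘ m := by
    funext xs
    funext y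
    simp only [Function.comp_apply, hcnt xs y]
  rw [hEm, ← Finset.image_image]
  refine (Finset.card_image_le).trans ?_
  have hsub : T.image m ⊆ (Finset.univ : Finset (Sym Ω N)).image Sym.toMultiset := by
    intro s hs
    obtain ⟨xs, _, rfl⟩ := Finset.mem_image.mp hs
    have hcard : Multiset.card (m xs) = N := by simp [hm]
    exact Finset.mem_image.mpr ⟨⟨m xs, hcard⟩, Finset.mem_univ _, rfl⟩
  calc (T.image m).card ≤ ((Finset.univ : Finset (Sym Ω N)).image Sym.toMultiset).card :=
        Finset.card_le_card hsub
    _ ≤ (Finset.univ : Finset (Sym Ω N)).card := Finset.card_image_le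
    _ = Fintype.card (Sym Ω N) := Finset.card_univ
    _ = (Fintype.card Ω + N - 1).choose N := Sym.card_sym_eq_choose N
    _ ≤ (Fintype.card Ω + N).choose N := Nat.choose_le_choose N (Nat.sub_le _ _)
    _ = (Fintype.card Ω + N).choose (Fintype.card Ω) := by
        rw [← Nat.choose_symm (Nat.le_add_left N (Fintype.card Ω)), Nat.add_sub_cancel]

lemma stmt19_part2 {Ω : Type*} [Fintype Ω] [DecidableEq Ω] (p : Ω → ℝ)
    (hp : ∀ x, 0 < p x)
    (A : Set (Ω → ℝ)) [DecidablePred (· ∈ A)]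
    (hAsub : A ⊆ {q : Ω → ℝ | (∀ x, 0 ≤ q x) ∧ ∑ x, q x = 1})
    (I : ℝ) (hIle : ∀ q ∈ A, I ≤ ∑ x, q x * Real.log (q x / p x))
    (N : ℕ) (hN : 0 < N) :
    (∑ xs ∈ Finset.univ.filter (fun xs : Fin N → Ω =>
        (fun y => ((Finset.univ.filter (fun i => xs i = y)).card : ℝ) / N) ∈ A),
      ∏ i, p (xs i)) ≤
    ((Fintype.card Ω + N).choose (Fintype.card Ω) : ℝ) * Real.exp (-(N : ℝ) * I) := by
  have hNpos : (0:ℝ) < N := Nat.cast_pos.mpr hN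
  set E : (Fin N → Ω) → (Ω → ℝ) :=
    fun xs => fun y => ((Finset.univ.filter (fun i => xs i = y)).card : ℝ) / N with hE
  set T := Finset.univ.filter (fun xs : Fin N → Ω =>
    (fun y => ((Finset.univ.filter (fun i => xs i = y)).card : ℝ) / N) ∈ A) with hT
  have hmemA : ∀ xs ∈ T, E xs ∈ A := fun xs hxs => (Finset.mem_filter.mp hxs).2
  have hEnn : ∀ (xs : Fin N → Ω) (y : Ω), 0 ≤ E xs y :=
    fun xs y => div_nonneg (Nat.cast_nonneg _) hNpos.le
  calc ∑ xs ∈ T, ∏ i, p (xs i)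
      = ∑ xs ∈ T, Real.exp (-(N:ℝ) * ∑ y, E xs y * Real.log (E xs y / p y)) * ∏ i, E xs (xs i) :=
        Finset.sum_congr rfl fun xs _ => stmt19_key_identity p hp hN xs
    _ ≤ ∑ xs ∈ T, Real.exp (-(N:ℝ) * I) * ∏ i, E xs (xs i) := by
        refine Finset.sum_le_sum fun xs hxs => ?_
        refine mul_le_mul_of_nonneg_right ?_ (Finset.prod_nonneg fun i _ => hEnn xs (xs i))
        refine Real.exp_le_exp.mpr ?_
        have h := hIle (E xs) (hmemA xs hxs)
        nlinarith
    _ = Real.exp (-(N:ℝ) * I) * ∑ xs ∈ T, ∏ i, E xs (xs i) := (Finset.mul_sum _ _ _).symm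
    _ ≤ Real.exp (-(N:ℝ) * I) * ((T.image E).card : ℝ) := by
        refine mul_le_mul_of_nonneg_left ?_ (Real.exp_pos _).le
        rw [← Finset.sum_fiberwise_of_maps_to (fun xs hxs => Finset.mem_image_of_mem E hxs)
            (fun xs => ∏ i, E xs (xs i))]
        calc ∑ t ∈ T.image E, ∑ xs ∈ T.filter (fun xs => E xs = t), ∏ i, E xs (xs i)
            ≤ ∑ _t ∈ T.image E, (1:ℝ) := by
              refine Finset.sum_le_sum fun t ht => ?_
              obtain ⟨xs0, hxs0, rfl⟩ := Finset.mem_image.mp ht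
              obtain ⟨ht0, ht1⟩ := hAsub (hmemA xs0 hxs0)
              calc ∑ xs ∈ T.filter (fun xs => E xs = E xs0), ∏ i, E xs (xs i)
                  = ∑ xs ∈ T.filter (fun xs => E xs = E xs0), ∏ i, E xs0 (xs i) :=
                    Finset.sum_congr rfl fun xs hxs => by
                      rw [(Finset.mem_filter.mp hxs).2]
                _ ≤ ∑ xs : Fin N → Ω, ∏ i, E xs0 (xs i) :=
                    Finset.sum_le_sum_of_subset_of_nonneg (Finset.subset_univ _)
                      (fun xs _ _ => Finset.prod_nonneg fun i _ => hEnn xs0 (xs i))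
                _ = 1 := by
                    have hps := Finset.prod_univ_sum (fun _ : Fin N => (Finset.univ : Finset Ω))
                      (fun _ y => E xs0 y)
                    rw [Fintype.piFinset_univ] at hps
                    rw [← hps, ht1]
                    simp
            _ = ((T.image E).card : ℝ) := by simp
    _ ≤ ((Fintype.card Ω + N).choose (Fintype.card Ω) : ℝ) * Real.exp (-(N:ℝ) * I) := by
        rw [mul_comm]
        refine mul_le_mul_of_nonneg_right ?_ (Real.exp_pos _).le
        exact_mod_cast stmt19_card_bound T

/-- Sanov upper bound via the method of types: for a strictly
positive probability distribution `p` on a finite set `Ω` and a nonempty closed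
set `A` of probability distributions with `p ∉ A`, the infimum of `K(q‖p)` over
`q ∈ A` is positive, and for i.i.d. sampling from `p` the probability that the
empirical distribution of `N` samples lies in `A` is at most
`C(|Ω|+N, |Ω|)·exp(-N·inf_{q∈A} K(q‖p))`. -/
theorem stmt19 {Ω : Type*} [Fintype Ω] [DecidableEq Ω] (p : Ω → ℝ)
    (hp : ∀ x, 0 < p x) (hpsum : ∑ x, p x = 1)
    (A : Set (Ω → ℝ)) [DecidablePred (· ∈ A)]
    (hAsub : A ⊆ {q : Ω → ℝ | (∀ x, 0 ≤ q x) ∧ ∑ x, q x = 1})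
    (hclosed : IsClosed A) (hpA : p ∉ A) (hAne : A.Nonempty) :
    0 < sInf {r : ℝ | ∃ q ∈ A, r = ∑ x, q x * Real.log (q x / p x)} ∧
    ∀ N : ℕ, 0 < N →
      (∑ xs ∈ Finset.univ.filter (fun xs : Fin N → Ω =>
          (fun y => ((Finset.univ.filter (fun i => xs i = y)).card : ℝ) / N) ∈ A),
        ∏ i, p (xs i)) ≤
      (Nat.choose (Fintype.card Ω + N) (Fintype.card Ω) : ℝ) *
        Real.exp (-(N : ℝ) *
          sInf {r : ℝ | ∃ q ∈ A, r = ∑ x, q x * Real.log (q x / p x)}) := by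
  obtain ⟨q0, hq0A, hq0pos, hq0min⟩ := stmt19_part1 p hp hpsum A hAsub hclosed hpA hAne
  have hSne : {r : ℝ | ∃ q ∈ A, r = ∑ x, q x * Real.log (q x / p x)}.Nonempty :=
    ⟨_, q0, hq0A, rfl⟩
  have hlb : ∀ r ∈ {r : ℝ | ∃ q ∈ A, r = ∑ x, q x * Real.log (q x / p x)},
      (∑ x, q0 x * Real.log (q0 x / p x)) ≤ r := by
    rintro r ⟨q, hq, rfl⟩; exact hq0min q hq
  have hIlb : (∑ x, q0 x * Real.log (q0 x / p x)) ≤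
      sInf {r : ℝ | ∃ q ∈ A, r = ∑ x, q x * Real.log (q x / p x)} := le_csInf hSne hlb
  have hIle : ∀ q ∈ A, sInf {r : ℝ | ∃ q ∈ A, r = ∑ x, q x * Real.log (q x / p x)} ≤
      ∑ x, q x * Real.log (q x / p x) := fun q hq =>
    csInf_le ⟨_, hlb⟩ ⟨q, hq, rfl⟩
  exact ⟨lt_of_lt_of_le hq0pos hIlb,
    fun N hN => stmt19_part2 p hp A hAsub _ hIle N hN⟩
end
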